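/- arXiv:1906.00547 — 2 statements merged into one kernel-verified Lean document; each statement's English description precedes it below -/
import Mathlib

section
/- Fix arm a and intervals [l_i, r_i] for all i. Define, for an assignment P' = (μ'_i)_{i∈[K]} with μ'_i ∈ [l_i, r_i], the right gap of a as max{μ'_j − μ'_a : μ'_j > μ'_a and no μ'_k lies strictly between μ'_a and μ'_j}. Then the supremum of this right gap over all valid assignments is attained by an assignment in which μ'_a = l_i for some arm i with l_i ∈ [l_a, r_a]. -/
open Finset

/-- The right gap of arm `a` under an assignment `f`: the distance from `f a`
    to the nearest assigned value strictly above it (0 if none). -/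
noncomputable def rightGap {K : ℕ} (f : Fin K → ℝ) (a : Fin K) : ℝ :=
  if h : (Finset.univ.filter fun j => f a < f j).Nonempty then
    (Finset.univ.filter fun j => f a < f j).inf' h f - f a
  else 0

lemma rightGap_nonneg {K : ℕ} (f : Fin K → ℝ) (a : Fin K) : 0 ≤ rightGap f a := by
  unfold rightGap
  split_ifs with h
  · rw [sub_nonneg]
    exact le_inf' h f (fun b hb => le_of_lt (by simpa using (mem_filter.1 hb).2))
  · exact le_refl 0

/-- The supremum of the right gap of arm `a` over all assignments consistent
    with the confidence intervals is attained by an assignment in which the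
    mean of `a` is placed at `l i` for some arm `i` with `l i ∈ [l a, r a]`. -/
theorem stmt_5 (K : ℕ) (l r : Fin K → ℝ)
    (hlr : ∀ i, l i ≤ r i) (a : Fin K) :
    ∃ μstar : Fin K → ℝ,
      (∀ i, l i ≤ μstar i ∧ μstar i ≤ r i) ∧
      (∃ i : Fin K, l a ≤ l i ∧ l i ≤ r a ∧ μstar a = l i) ∧
      (∀ μ' : Fin K → ℝ, (∀ i, l i ≤ μ' i ∧ μ' i ≤ r i) →
        rightGap μ' a ≤ rightGap μstar a) := by
  classical
  set cand : Fin K → Fin K → Fin K → ℝ := fun i j k =>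
    if k = a then l i else if k = j then r j else if l i < l k then r k else min (r k) (l i)
    with hcand
  have hvalid : ∀ i j, l a ≤ l i → l i ≤ r a → ∀ k, l k ≤ cand i j k ∧ cand i j k ≤ r k := by
    intro i j h1 h2 k
    simp only [hcand]
    split_ifs with hk hj hik
    · subst hk; exact ⟨h1, h2⟩
    · subst hj; exact ⟨hlr k, le_refl _⟩
    · exact ⟨hlr k, le_refl _⟩
    · exact ⟨le_min (hlr k) (le_of_not_gt hik), min_le_left _ _⟩
  set S : Finset (Fin K × Fin K) := (univ.filter fun i => l a ≤ l i ∧ l i ≤ r a) ×ˢ univ with hSdef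
  have hS : S.Nonempty := ⟨(a, a), by simp [hSdef, hlr a]⟩
  obtain ⟨⟨i0, j0⟩, hmem, hmax⟩ := S.exists_max_image (fun p => rightGap (cand p.1 p.2) a) hS
  have hi0 : l a ≤ l i0 ∧ l i0 ≤ r a := by
    simpa [hSdef] using hmem
  refine ⟨cand i0 j0, hvalid i0 j0 hi0.1 hi0.2, ⟨i0, hi0.1, hi0.2, by simp [hcand]⟩, ?_⟩
  intro μ' hμ'
  by_cases hA : (univ.filter fun j => μ' a < μ' j).Nonempty
  · obtain ⟨jm, hjmA, hjmv⟩ := exists_mem_eq_inf' hA μ'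
    have hjm : μ' a < μ' jm := by simpa using (mem_filter.1 hjmA).2
    have hjma : jm ≠ a := fun h => absurd (h ▸ hjm) (lt_irrefl _)
    set S' : Finset (Fin K) := univ.filter fun i => l a ≤ l i ∧ l i ≤ μ' a with hS'def
    have hS' : S'.Nonempty := ⟨a, by simp [hS'def, (hμ' a).1]⟩
    obtain ⟨i1, hi1mem, hi1max⟩ := S'.exists_max_image l hS'
    have hi1 : l a ≤ l i1 ∧ l i1 ≤ μ' a := by simpa [hS'def] using hi1mem
    have hx0 : μ' a ≤ r a := (hμ' a).2
    have hca : cand i1 jm a = l i1 := by simp [hcand]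
    have hcjm : cand i1 jm jm = r jm := by simp [hcand, hjma]
    have hcjm_gt : cand i1 jm a < cand i1 jm jm := by
      rw [hca, hcjm]
      exact lt_of_le_of_lt hi1.2 (lt_of_lt_of_le hjm ((hμ' jm).2))
    have hB : (univ.filter fun k => cand i1 jm a < cand i1 jm k).Nonempty :=
      ⟨jm, mem_filter.2 ⟨mem_univ _, hcjm_gt⟩⟩
    have hkey : ∀ k ∈ univ.filter fun k => cand i1 jm a < cand i1 jm k,
        μ' jm - μ' a + l i1 ≤ cand i1 jm k := by
      intro k hk
      have hk' : cand i1 jm a < cand i1 jm k := (mem_filter.1 hk).2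
      rw [hca] at hk'
      by_cases hkjm : k = jm
      · rw [hkjm, hcjm]
        have h1 : μ' jm ≤ r jm := (hμ' jm).2
        linarith [hi1.2]
      · have hka : k ≠ a := by
          intro h
          rw [h, hca] at hk'
          exact lt_irrefl _ hk'
        have hck : cand i1 jm k = if l i1 < l k then r k else min (r k) (l i1) := by
          simp [hcand, hka, hkjm]
        by_cases hlk : l i1 < l k
        · rw [hck, if_pos hlk]
          have hgt : μ' a < l k := by
            by_contra hle
            push_neg at hle
            by_cases hla : l a ≤ l k
            · have hkS' : k ∈ S' := by simp [hS'def, hla, hle]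
              exact absurd (hi1max k hkS') (not_le.2 hlk)
            · push_neg at hla
              exact absurd (lt_of_lt_of_le hla hi1.1) (not_lt.2 (le_of_lt hlk))
          have hkabove : k ∈ univ.filter fun j => μ' a < μ' j :=
            mem_filter.2 ⟨mem_univ _, lt_of_lt_of_le hgt (hμ' k).1⟩
          have h1 : (univ.filter fun j => μ' a < μ' j).inf' hA μ' ≤ μ' k := inf'_le μ' hkabove
          rw [hjmv] at h1
          linarith [(hμ' k).2, hi1.2]
        · rw [hck, if_neg hlk] at hk'
          exact absurd hk' (not_lt.2 (min_le_right _ _))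
    have h2 : μ' jm - μ' a + l i1 ≤
        (univ.filter fun k => cand i1 jm a < cand i1 jm k).inf' hB (cand i1 jm) :=
      le_inf' hB _ hkey
    have hgoal : rightGap μ' a ≤ rightGap (cand i1 jm) a := by
      unfold rightGap
      rw [dif_pos hA, dif_pos hB]
      linarith [hjmv, hca, h2]
    refine hgoal.trans (hmax (i1, jm) ?_)
    simp only [hSdef, mem_product, mem_filter, mem_univ, true_and]
    exact ⟨⟨hi1.1, hi1.2.trans hx0⟩, trivial⟩
  · unfold rightGap
    rw [dif_neg hA]
    exact rightGap_nonneg _ _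
end

section
/- Suppose there exists k such that max over arms a with empirical rank > k of r_a(t) is strictly less than min over arms a with empirical rank ≤ k of l_a(t), and all means lie in their confidence intervals. Then LΔ(t) := max_k ( min_{rank ≤ k} l_a(t) − max_{rank > k} r_a(t) ) is a valid lower bound on the maximum adjacent gap: LΔ(t) ≤ Δ_max. Consequently, if for some arm a we have UΔ_a(t) < LΔ(t) where UΔ_a(t) is a valid upper bound on arm a's gap Δ_a, then a ∉ {(m), (m+1)}. -/
open Finset

/-- The maximum-gap lower bound for a split at rank `k`:
    min over ranks p ≤ k of the lower bound minus max over ranks p > k of the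
    upper bound (bounds indexed by empirical rank). -/
noncomputable def LDelta (K k : ℕ) (hk : k + 1 < K) (l r : Fin K → ℝ) : ℝ :=
  (Finset.univ.filter fun p : Fin K => (p : ℕ) ≤ k).inf'
      ⟨⟨0, by omega⟩, by simp⟩ l -
  (Finset.univ.filter fun p : Fin K => k < (p : ℕ)).sup'
      ⟨⟨k + 1, hk⟩, by simp⟩ r

/-- The gap Δ_a of arm `a` in the sorted order: the max of its right and left
    adjacent gaps (a missing side for an extreme arm is ignored). -/
def armGap (K : ℕ) (μ : Fin K → ℝ) (a : Fin K) : ℝ :=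
  max (if h : (a : ℕ) + 1 < K then μ a - μ ⟨(a : ℕ) + 1, h⟩ else 0)
      (if 0 < (a : ℕ) then
        μ ⟨(a : ℕ) - 1, lt_of_le_of_lt (Nat.sub_le _ _) a.isLt⟩ - μ a
      else 0)

/-- If some rank split `k` separates the confidence intervals (so the lower
    bound LΔ is positive), then LΔ is a valid lower bound on the maximum
    adjacent gap, and any arm whose valid gap upper bound is below LΔ is not
    one of the two arms realizing the maximum gap. -/
theorem stmt_15 (K m k : ℕ) (μ l r : Fin K → ℝ) (σ : Equiv.Perm (Fin K))
    (hm : m + 1 < K) (hk : k + 1 < K)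
    (hsorted : ∀ p q : Fin K, p < q → μ q < μ p)
    (hmax : ∀ (j : ℕ) (hj : j + 1 < K),
      μ ⟨j, by omega⟩ - μ ⟨j + 1, hj⟩ ≤ μ ⟨m, by omega⟩ - μ ⟨m + 1, hm⟩)
    (hci : ∀ a, l a ≤ μ a ∧ μ a ≤ r a)
    (hsep : 0 < LDelta K k hk (fun p => l (σ p)) (fun p => r (σ p))) :
    LDelta K k hk (fun p => l (σ p)) (fun p => r (σ p)) ≤
        μ ⟨m, by omega⟩ - μ ⟨m + 1, hm⟩ ∧
    ∀ (a : Fin K) (U : ℝ), armGap K μ a ≤ U →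
      U < LDelta K k hk (fun p => l (σ p)) (fun p => r (σ p)) →
      a ≠ ⟨m, by omega⟩ ∧ a ≠ ⟨m + 1, hm⟩ := by
  have hgap : ∀ a b : Fin K, μ b < μ a → a < b := by
    intro a b hab
    rcases lt_trichotomy a b with h | h | h
    · exact h
    · subst h; exact absurd hab (lt_irrefl _)
    · exact absurd (hsorted b a h) (by linarith)
  set kf : Fin K := ⟨k, by omega⟩ with hkf
  set kf1 : Fin K := ⟨k + 1, hk⟩ with hkf1
  set S : Finset (Fin K) := Finset.univ.filter fun p : Fin K => (p : ℕ) ≤ k with hS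
  set T : Finset (Fin K) := Finset.univ.filter fun p : Fin K => k < (p : ℕ) with hT
  have hSne : S.Nonempty := ⟨⟨0, by omega⟩, by simp [hS]⟩
  have hTne : T.Nonempty := ⟨kf1, by simp [hT, hkf1]⟩
  set IL : ℝ := S.inf' hSne (fun p => l (σ p)) with hIL
  set SR : ℝ := T.sup' hTne (fun p => r (σ p)) with hSR
  have hLD : LDelta K k hk (fun p => l (σ p)) (fun p => r (σ p)) = IL - SR := by
    rw [hIL, hSR]
    unfold LDelta
    congr 1
  rw [hLD] at hsep ⊢
  have hsep' : SR < IL := by linarith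
  have hScard : S.card = k + 1 := by
    have hSeq : S = Finset.Iic kf := by
      ext p; simp [hS, Fin.le_def, hkf]
    rw [hSeq, Fin.card_Iic]
  have hTcard : T.card = K - (k + 1) := by
    have hTeq : T = Finset.Ioi kf := by
      ext p; simp [hT, Fin.lt_def, hkf]
    rw [hTeq, Fin.card_Ioi]
    have hv : (kf : ℕ) = k := rfl
    omega
  -- arm kf is hit by some rank ≤ k
  have hmem1 : ∃ q ∈ S, σ q = kf := by
    by_contra h
    push_neg at h
    have hpre : σ.symm kf ∈ T := by
      simp only [hT, Finset.mem_filter, Finset.mem_univ, true_and]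
      by_contra hle
      push_neg at hle
      exact h (σ.symm kf) (by simp [hS, hle]) (σ.apply_symm_apply kf)
    have hsup : μ kf ≤ SR := by
      have := Finset.le_sup' (fun p => r (σ p)) hpre
      simp only [σ.apply_symm_apply] at this
      exact le_trans (hci kf).2 this
    have hlt : ∀ q ∈ S, σ q < kf := by
      intro q hq
      have h1 : IL ≤ l (σ q) := Finset.inf'_le _ hq
      have h2 := (hci (σ q)).1
      exact hgap _ _ (by linarith)
    have himg : S.image σ ⊆ Finset.Iio kf := by
      intro a ha
      rw [Finset.mem_image] at ha
      obtain ⟨q, hq, rfl⟩ := ha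
      exact Finset.mem_Iio.mpr (hlt q hq)
    have hcard := Finset.card_le_card himg
    rw [Finset.card_image_of_injective _ σ.injective, hScard, Fin.card_Iio] at hcard
    simp [hkf] at hcard
  -- arm kf1 is hit by some rank > k
  have hmem2 : ∃ q ∈ T, σ q = kf1 := by
    by_contra h
    push_neg at h
    have hpre : σ.symm kf1 ∈ S := by
      simp only [hS, Finset.mem_filter, Finset.mem_univ, true_and]
      by_contra hle
      push_neg at hle
      exact h (σ.symm kf1) (by simp [hT, hle]) (σ.apply_symm_apply kf1)
    have hinf : IL ≤ μ kf1 := by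
      have := Finset.inf'_le (fun p => l (σ p)) hpre
      simp only [σ.apply_symm_apply] at this
      exact le_trans this (hci kf1).1
    have hlt : ∀ q ∈ T, kf1 < σ q := by
      intro q hq
      have h1 : r (σ q) ≤ SR := by rw [hSR]; exact Finset.le_sup' (fun p => r (σ p)) hq
      have h2 := (hci (σ q)).2
      exact hgap _ _ (by linarith)
    have himg : T.image σ ⊆ Finset.Ioi kf1 := by
      intro a ha
      rw [Finset.mem_image] at ha
      obtain ⟨q, hq, rfl⟩ := ha
      exact Finset.mem_Ioi.mpr (hlt q hq)
    have hcard := Finset.card_le_card himg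
    rw [Finset.card_image_of_injective _ σ.injective, hTcard, Fin.card_Ioi] at hcard
    have hv : (kf1 : ℕ) = k + 1 := rfl
    omega
  obtain ⟨q1, hq1S, hq1⟩ := hmem1
  obtain ⟨q2, hq2T, hq2⟩ := hmem2
  have h1 : IL ≤ μ kf := by
    have := Finset.inf'_le (fun p => l (σ p)) hq1S
    rw [hq1] at this
    exact le_trans this (hci kf).1
  have h2 : μ kf1 ≤ SR := by
    have := Finset.le_sup' (fun p => r (σ p)) hq2T
    rw [hq2] at this
    exact le_trans (hci kf1).2 this
  have hmain : IL - SR ≤ μ ⟨m, by omega⟩ - μ ⟨m + 1, hm⟩ := by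
    have h3 := hmax k hk
    have e1 : μ kf = μ ⟨k, by omega⟩ := rfl
    have e2 : μ kf1 = μ ⟨k + 1, hk⟩ := rfl
    linarith
  refine ⟨hmain, ?_⟩
  intro a U hU hUlt
  have hUm : U < μ ⟨m, by omega⟩ - μ ⟨m + 1, hm⟩ := lt_of_lt_of_le hUlt hmain
  constructor
  · rintro rfl
    have : μ (⟨m, by omega⟩ : Fin K) - μ ⟨m + 1, hm⟩ ≤ armGap K μ ⟨m, by omega⟩ := by
      unfold armGap
      simp only
      rw [dif_pos hm]
      exact le_max_left _ _
    linarith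
  · rintro rfl
    have : μ (⟨m, by omega⟩ : Fin K) - μ ⟨m + 1, hm⟩ ≤ armGap K μ ⟨m + 1, hm⟩ := by
      unfold armGap
      simp only
      rw [if_pos (by omega : 0 < m + 1)]
      have : (⟨m + 1 - 1, by omega⟩ : Fin K) = ⟨m, by omega⟩ := by simp
      rw [this]
      exact le_max_right _ _
    linarith
end
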